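/- For every positive integer m, the 2m-th moment K(2m) = E[(τ₁ − τ₂)^{2m}] of the difference of two independent Poisson(1/2) random variables is a positive integer. -/

import Mathlib

/-!
Write `M p = E (τ₁ - τ₂)^p` for independent `τ₁, τ₂ ~ Poisson(r)`. Stein's identity
`E[τ₁ g(τ₁, τ₂)] = r E[g(τ₁ + 1, τ₂)]` gives `E[τ₁ (τ₁ - τ₂)^p] = r Σ_j C(p, j) M j`, and swapping
`τ₁` and `τ₂` gives `E[τ₂ (τ₁ - τ₂)^p] = (-1)^p E[τ₁ (τ₁ - τ₂)^p]`. Subtracting,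
`M (p + 1) = (1 - (-1)^p) r Σ_{j ≤ p} C(p, j) M j`. For `r = 1/2` the factor `(1 - (-1)^p) r` is
`0` or `1`, so starting from `M 0 = 1` every moment is a natural number, and
`M (2m) ≥ C(2m - 1, 0) M 0 = 1`.
-/

/-- `K(p) = E (τ₁ - τ₂)^p` for independent `τ₁, τ₂ ~ Poisson(1/2)`. -/
noncomputable def K (p : ℕ) : ℝ :=
  ∑' k : ℕ, ∑' l : ℕ,
    (Real.exp (-(1/2 : ℝ)) * (1/2 : ℝ) ^ k / (Nat.factorial k)) *
    (Real.exp (-(1/2 : ℝ)) * (1/2 : ℝ) ^ l / (Nat.factorial l)) *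
    ((k : ℝ) - (l : ℝ)) ^ p

open Finset Real
open scoped Nat

noncomputable def poissonWeight (r : ℝ) (n : ℕ) : ℝ := exp (-r) * r ^ n / n !

noncomputable def skellamMoment (r : ℝ) (p : ℕ) : ℝ :=
  ∑' x : ℕ × ℕ, poissonWeight r x.1 * poissonWeight r x.2 * ((x.1 : ℝ) - x.2) ^ p

theorem abs_natCast_sub_natCast_le (k l : ℕ) : |(k : ℝ) - l| ≤ ((k : ℝ) + 1) * (l + 1) := by
  rw [abs_le]
  constructor <;> nlinarith [(k.cast_nonneg : (0 : ℝ) ≤ k), (l.cast_nonneg : (0 : ℝ) ≤ l)]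

section Skellam

variable (r : ℝ)

theorem hasSum_poissonWeight : HasSum (poissonWeight r) 1 := by
  have h := (NormedSpace.expSeries_div_hasSum_exp r).mul_left (exp (-r))
  rw [← exp_eq_exp_ℝ, ← exp_add, neg_add_cancel, exp_zero] at h
  exact h.congr_fun fun n => mul_div_assoc _ _ _

theorem poissonWeight_succ_mul (n : ℕ) :
    poissonWeight r (n + 1) * (n + 1) = r * poissonWeight r n := by
  simp only [poissonWeight, Nat.factorial_succ, pow_succ]
  push_cast
  field_simp

theorem summable_abs_poissonWeight_mul_pow (d : ℕ) :
    Summable fun n : ℕ => |poissonWeight r n| * ((n : ℝ) + 1) ^ d := by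
  have hpow (n : ℕ) : ((n : ℝ) + 1) ^ d ≤ d ! * exp 1 * exp 1 ^ n := by
    have := pow_div_factorial_le_exp (x := (n : ℝ) + 1) (by positivity) d
    rw [div_le_iff₀ (by positivity), exp_add] at this
    rw [← exp_nat_mul, mul_one]
    linarith
  refine Summable.of_nonneg_of_le (fun n => by positivity) (fun n => ?_)
    ((summable_pow_div_factorial (exp 1 * |r|)).mul_left (exp (-r) * d ! * exp 1))
  calc |poissonWeight r n| * ((n : ℝ) + 1) ^ d
      ≤ exp (-r) * |r| ^ n / n ! * (d ! * exp 1 * exp 1 ^ n) := by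
        rw [poissonWeight, abs_div, abs_mul, abs_exp, abs_pow, Nat.abs_cast]
        gcongr
        exact hpow n
    _ = exp (-r) * d ! * exp 1 * ((exp 1 * |r|) ^ n / n !) := by ring

theorem summable_poissonWeight_mul_poissonWeight_mul {g : ℕ × ℕ → ℝ} {d : ℕ}
    (hg : ∀ x, |g x| ≤ (((x.1 : ℝ) + 1) * (x.2 + 1)) ^ d) :
    Summable fun x : ℕ × ℕ => poissonWeight r x.1 * poissonWeight r x.2 * g x := by
  have hprod := (summable_abs_poissonWeight_mul_pow r d).mul_of_nonneg
    (summable_abs_poissonWeight_mul_pow r d) (fun n => by positivity) (fun n => by positivity)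
  refine .of_norm_bounded hprod fun x => ?_
  calc ‖poissonWeight r x.1 * poissonWeight r x.2 * g x‖
      = |poissonWeight r x.1| * |poissonWeight r x.2| * |g x| := by
        rw [Real.norm_eq_abs, abs_mul, abs_mul]
    _ ≤ |poissonWeight r x.1| * |poissonWeight r x.2| * (((x.1 : ℝ) + 1) * (x.2 + 1)) ^ d := by
        gcongr
        exact hg x
    _ = _ := by rw [mul_pow]; ring

theorem summable_skellamMoment (p : ℕ) :
    Summable fun x : ℕ × ℕ => poissonWeight r x.1 * poissonWeight r x.2 * ((x.1 : ℝ) - x.2) ^ p :=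
  summable_poissonWeight_mul_poissonWeight_mul r fun x => by
    rw [abs_pow]
    gcongr
    exact abs_natCast_sub_natCast_le x.1 x.2

/-- Stein's identity. No summability is needed: the shift `τ₁ ↦ τ₁ + 1` is a bijection onto the
support of the left-hand side. -/
theorem tsum_poissonWeight_mul_fst_mul (g : ℕ × ℕ → ℝ) :
    ∑' x : ℕ × ℕ, poissonWeight r x.1 * poissonWeight r x.2 * (x.1 * g x) =
      r * ∑' x : ℕ × ℕ, poissonWeight r x.1 * poissonWeight r x.2 * g (x.1 + 1, x.2) := by
  have hshift : Function.Injective fun x : ℕ × ℕ => (x.1 + 1, x.2) := by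
    intro x y h
    simp only [Prod.mk.injEq, add_left_inj] at h
    exact Prod.ext h.1 h.2
  rw [← tsum_mul_left, ← hshift.tsum_eq]
  · refine tsum_congr fun x => ?_
    push_cast
    linear_combination (poissonWeight r x.2 * g (x.1 + 1, x.2)) * poissonWeight_succ_mul r x.1
  · rintro ⟨_ | k, l⟩ hx
    · simp at hx
    · exact ⟨(k, l), rfl⟩

theorem tsum_poissonWeight_mul_fst_mul_pow_sub (p : ℕ) :
    ∑' x : ℕ × ℕ, poissonWeight r x.1 * poissonWeight r x.2 * (x.1 * ((x.1 : ℝ) - x.2) ^ p) =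
      r * ∑ j ∈ range (p + 1), (p.choose j : ℝ) * skellamMoment r j := by
  refine (tsum_poissonWeight_mul_fst_mul r fun x => ((x.1 : ℝ) - x.2) ^ p).trans ?_
  have hexpand (x : ℕ × ℕ) :
      poissonWeight r x.1 * poissonWeight r x.2 * (((x.1 + 1 : ℕ) : ℝ) - x.2) ^ p =
        ∑ j ∈ range (p + 1), (p.choose j : ℝ) *
          (poissonWeight r x.1 * poissonWeight r x.2 * ((x.1 : ℝ) - x.2) ^ j) := by
    rw [Nat.cast_succ, add_sub_right_comm, add_pow, mul_sum]
    exact sum_congr rfl fun j _ => by ring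
  rw [tsum_congr hexpand,
    Summable.tsum_finsetSum fun j _ => (summable_skellamMoment r j).mul_left _]
  exact congrArg _ (sum_congr rfl fun j _ => tsum_mul_left)

theorem skellamMoment_zero : skellamMoment r 0 = 1 := by
  have hnorm : Summable fun n => ‖poissonWeight r n‖ := by
    simpa using summable_abs_poissonWeight_mul_pow r 0
  simp only [skellamMoment, pow_zero, mul_one]
  rw [← tsum_mul_tsum_of_summable_norm hnorm hnorm, (hasSum_poissonWeight r).tsum_eq, mul_one]

theorem skellamMoment_succ (p : ℕ) :
    skellamMoment r (p + 1) =
      (1 - (-1) ^ p) * r * ∑ j ∈ range (p + 1), (p.choose j : ℝ) * skellamMoment r j := by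
  set fst : ℕ × ℕ → ℝ := fun x =>
    poissonWeight r x.1 * poissonWeight r x.2 * (x.1 * ((x.1 : ℝ) - x.2) ^ p)
  set snd : ℕ × ℕ → ℝ := fun x =>
    poissonWeight r x.1 * poissonWeight r x.2 * (x.2 * ((x.1 : ℝ) - x.2) ^ p)
  have hfst : Summable fst :=
    summable_poissonWeight_mul_poissonWeight_mul r (d := p + 1) fun x => by
      rw [abs_mul, abs_pow, Nat.abs_cast, pow_succ']
      gcongr
      · nlinarith [(x.1.cast_nonneg : (0 : ℝ) ≤ x.1), (x.2.cast_nonneg : (0 : ℝ) ≤ x.2)]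
      · exact abs_natCast_sub_natCast_le x.1 x.2
  have hsnd : Summable snd :=
    (hfst.sub (summable_skellamMoment r (p + 1))).congr fun x => by simp only [fst, snd]; ring
  have hswap : ∑' x, snd x = (-1) ^ p * ∑' x, fst x := by
    rw [← tsum_mul_left, ← (Equiv.prodComm ℕ ℕ).tsum_eq]
    refine tsum_congr fun x => ?_
    simp only [fst, snd, Equiv.prodComm_apply, Prod.fst_swap, Prod.snd_swap]
    rw [← neg_sub, neg_pow]
    ring
  calc skellamMoment r (p + 1) = ∑' x, fst x - ∑' x, snd x := by
        rw [← hfst.tsum_sub hsnd]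
        exact tsum_congr fun x => by simp only [fst, snd]; ring
    _ = (1 - (-1) ^ p) * ∑' x, fst x := by rw [hswap]; ring
    _ = _ := by rw [tsum_poissonWeight_mul_fst_mul_pow_sub]; ring

end Skellam

theorem K_eq_skellamMoment (p : ℕ) : K p = skellamMoment (1 / 2) p :=
  (summable_skellamMoment (1 / 2) p).tsum_prod.symm

theorem K_zero : K 0 = 1 := by
  rw [K_eq_skellamMoment, skellamMoment_zero]

theorem K_succ_of_even {p : ℕ} (hp : Even p) : K (p + 1) = 0 := by
  rw [K_eq_skellamMoment, skellamMoment_succ, hp.neg_one_pow, sub_self, zero_mul, zero_mul]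

theorem K_succ_of_odd {p : ℕ} (hp : Odd p) :
    K (p + 1) = ∑ j ∈ range (p + 1), (p.choose j : ℝ) * K j := by
  simp only [K_eq_skellamMoment, skellamMoment_succ, hp.neg_one_pow]
  norm_num

theorem K_mem_rangeS_natCast (p : ℕ) : K p ∈ (Nat.castRingHom ℝ).rangeS := by
  induction p using Nat.strong_induction_on with
  | _ p ih =>
    rcases p with _ | p
    · rw [K_zero]
      exact one_mem _
    rcases p.even_or_odd with hp | hp
    · rw [K_succ_of_even hp]
      exact zero_mem _
    · rw [K_succ_of_odd hp]
      exact sum_mem fun j hj => mul_mem (natCast_mem _ _) (ih j (mem_range.1 hj))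

theorem K_nonneg (p : ℕ) : 0 ≤ K p := by
  obtain ⟨n, hn⟩ := RingHom.mem_rangeS.1 (K_mem_rangeS_natCast p)
  rw [← hn]
  exact n.cast_nonneg

theorem one_le_K_two_mul (m : ℕ) : 1 ≤ K (2 * m) := by
  rcases m with _ | m
  · rw [mul_zero, K_zero]
  rw [show 2 * (m + 1) = 2 * m + 1 + 1 by ring, K_succ_of_odd (odd_two_mul_add_one m)]
  calc (1 : ℝ) = ((2 * m + 1).choose 0 : ℝ) * K 0 := by rw [Nat.choose_zero_right, K_zero]; simp
    _ ≤ _ := single_le_sum (fun j _ => mul_nonneg (Nat.cast_nonneg _) (K_nonneg j)) (by simp)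

theorem K_even_is_positive_integer_general (m : ℕ) :
    ∃ N : ℕ, 0 < N ∧ K (2 * m) = N := by
  obtain ⟨N, hN⟩ := RingHom.mem_rangeS.1 (K_mem_rangeS_natCast (2 * m))
  exact ⟨N, Nat.one_le_cast.mp (hN ▸ one_le_K_two_mul m), hN.symm⟩

theorem K_even_is_positive_integer (m : ℕ) (hm : 0 < m) :
    ∃ N : ℕ, 0 < N ∧ K (2 * m) = N :=
  K_even_is_positive_integer_general m
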